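/- Let p ≡ 3 (mod 8) be an odd prime with p ≠ 3, and let β ∈ {2, 2^{−1}}, where 2^{−1} is the multiplicative inverse of 2 modulo p. Then the set S_β = {{x, βx} : x ∈ QR(p)} is a strong Skolem starter for ℤ_p. -/

import Mathlib

/-! Since `p ≡ 3 (mod 8)`, both `-1` and `2` are nonsquares modulo `p`; hence so is `β`, while
`-2` is a square. Because `β` is a nonsquare, every nonzero `a` is `x` or `βx` for exactly one
nonzero square `x`; because `-1` is a nonsquare, every nonzero `a` is `±(1 - β)x` for exactly one
such `x` and sign. The pair sums `(1 + β)x` are nonzero and distinct since `1 + β ∈ {3, 3/2}` and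
`p ≠ 3`. For the Skolem property, depending on the quadratic character of `i`, the starter contains
`{i, 2i}` or `{-2i, -i}`, and `2i < p` makes both pairs realise the difference `i` in increasing
order. -/

/-- The sum of the two entries of an unordered pair. -/
def pairSum {n : ℕ} : Sym2 (ZMod n) → ZMod n :=
  Sym2.lift ⟨fun x y => x + y, fun x y => add_comm x y⟩

/-- `S` is a starter for `ℤ_n`: a set of unordered pairs of distinct nonzero
elements such that every nonzero element lies in exactly one pair, and for every
nonzero `a` there is exactly one pair whose (signed) difference is `a`. -/
def IsStarter (n : ℕ) (S : Set (Sym2 (ZMod n))) : Prop :=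
  (∀ z ∈ S, ¬ z.IsDiag) ∧
  (∀ z ∈ S, (0 : ZMod n) ∉ z) ∧
  (∀ a : ZMod n, a ≠ 0 → ∃! z, z ∈ S ∧ a ∈ z) ∧
  (∀ a : ZMod n, a ≠ 0 → ∃! z, z ∈ S ∧ ∃ x y : ZMod n, z = s(x, y) ∧ x - y = a)

/-- A starter is strong if the pair sums are nonzero and pairwise distinct. -/
def IsStrongStarter (n : ℕ) (S : Set (Sym2 (ZMod n))) : Prop :=
  IsStarter n S ∧ (∀ z ∈ S, pairSum z ≠ 0) ∧
    ∀ z ∈ S, ∀ w ∈ S, pairSum z = pairSum w → z = w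

/-- A starter is Skolem if, identifying `ℤ_n ∖ {0}` with `1, …, n-1` via `ZMod.val`,
for every `i = 1, …, (n-1)/2` some pair `{x, y}` with `y > x` satisfies `y - x ≡ i (mod n)`. -/
def IsSkolemStarter (n : ℕ) (S : Set (Sym2 (ZMod n))) : Prop :=
  IsStarter n S ∧ ∀ i : ℕ, 1 ≤ i → i ≤ (n - 1) / 2 →
    ∃ z ∈ S, ∃ x y : ZMod n, z = s(x, y) ∧ x.val < y.val ∧ y - x = (i : ZMod n)

/-- A strong Skolem starter is a starter that is both strong and Skolem. -/
def IsStrongSkolemStarter (n : ℕ) (S : Set (Sym2 (ZMod n))) : Prop :=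
  IsStrongStarter n S ∧ IsSkolemStarter n S

section Squares

variable {F : Type*} [Field F] [Fintype F] {a r : F}

theorem isSquare_mul_iff_not_isSquare (hr : ¬IsSquare r) (ha : a ≠ 0) :
    IsSquare (r * a) ↔ ¬IsSquare a := by
  classical
  have hr0 : r ≠ 0 := by rintro rfl; exact hr IsSquare.zero
  rw [← quadraticChar_one_iff_isSquare (mul_ne_zero hr0 ha),
    ← quadraticChar_neg_one_iff_not_isSquare, map_mul,
    quadraticChar_neg_one_iff_not_isSquare.mpr hr]
  constructor <;> intro h <;> linear_combination -h

theorem existsUnique_isSquare_eq_or_mul_eq (hr : ¬IsSquare r) (ha : a ≠ 0) :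
    ∃! x, (x ≠ 0 ∧ IsSquare x) ∧ (x = a ∨ r * x = a) := by
  have hr0 : r ≠ 0 := by rintro rfl; exact hr IsSquare.zero
  by_cases hsq : IsSquare a
  · refine ⟨a, ⟨⟨ha, hsq⟩, .inl rfl⟩, ?_⟩
    rintro y ⟨⟨hy0, hys⟩, rfl | rfl⟩
    · rfl
    · exact absurd hys ((isSquare_mul_iff_not_isSquare hr hy0).mp hsq)
  · have hx : IsSquare (r⁻¹ * a) :=
      (isSquare_mul_iff_not_isSquare (isSquare_inv.not.mpr hr) ha).mpr hsq
    refine ⟨r⁻¹ * a, ⟨⟨mul_ne_zero (inv_ne_zero hr0) ha, hx⟩, .inr (by field_simp)⟩, ?_⟩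
    rintro y ⟨⟨-, hys⟩, rfl | rfl⟩
    · exact absurd hys hsq
    · field_simp

end Squares

theorem Sym2.exists_eq_mk_sub_eq_iff {G : Type*} [AddGroup G] {x y a : G} :
    (∃ u v, s(x, y) = s(u, v) ∧ u - v = a) ↔ x - y = a ∨ y - x = a := by
  constructor
  · rintro ⟨u, v, h, rfl⟩
    rcases Sym2.eq_iff.mp h with ⟨rfl, rfl⟩ | ⟨rfl, rfl⟩
    exacts [.inl rfl, .inr rfl]
  · rintro (h | h)
    exacts [⟨x, y, rfl, h⟩, ⟨y, x, Sym2.eq_swap, h⟩]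

theorem pairSum_mk {n : ℕ} (x y : ZMod n) : pairSum s(x, y) = x + y := rfl

theorem isSkolemStarter_of_mk_two_mul_mem_or {n : ℕ} {S : Set (Sym2 (ZMod n))}
    (hS : IsStarter n S) (h : ∀ a : ZMod n, a ≠ 0 → s(a, 2 * a) ∈ S ∨ s(-(2 * a), -a) ∈ S) :
    IsSkolemStarter n S := by
  refine ⟨hS, fun i hi hin => ?_⟩
  have h2i : 2 * i < n := by omega
  have : NeZero n := ⟨by omega⟩
  have hval : ((i : ZMod n)).val = i := ZMod.val_cast_of_lt (by omega)
  have hval2 : (2 * (i : ZMod n)).val = 2 * i := by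
    exact_mod_cast ZMod.val_cast_of_lt h2i
  have hi0 : (i : ZMod n) ≠ 0 := fun h0 => by rw [h0, ZMod.val_zero] at hval; omega
  have hi20 : 2 * (i : ZMod n) ≠ 0 := fun h0 => by rw [h0, ZMod.val_zero] at hval2; omega
  rcases h i hi0 with hmem | hmem
  · exact ⟨_, hmem, _, _, rfl, by omega, by ring⟩
  · refine ⟨_, hmem, _, _, rfl, ?_, by ring⟩
    rw [ZMod.neg_val, ZMod.neg_val, if_neg hi0, if_neg hi20, hval, hval2]
    omega

/-- The set `S_β` of the paper. -/
def qrStarter (p : ℕ) (β : ZMod p) : Set (Sym2 (ZMod p)) :=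
  {z | ∃ x : ZMod p, x ≠ 0 ∧ IsSquare x ∧ z = s(x, β * x)}

namespace qrStarter

variable {p : ℕ} [Fact p.Prime] {β : ZMod p}

theorem existsUnique_mem_of_existsUnique_isSquare {P : Sym2 (ZMod p) → Prop}
    (h : ∃! x, (x ≠ 0 ∧ IsSquare x) ∧ P s(x, β * x)) : ∃! z, z ∈ qrStarter p β ∧ P z := by
  obtain ⟨x, ⟨⟨hx0, hxs⟩, hP⟩, huniq⟩ := h
  refine ⟨_, ⟨⟨x, hx0, hxs, rfl⟩, hP⟩, ?_⟩
  rintro _ ⟨⟨y, hy0, hys, rfl⟩, hPy⟩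
  rw [huniq y ⟨⟨hy0, hys⟩, hPy⟩]

theorem isStarter (hneg : ¬IsSquare (-1 : ZMod p)) (hβ : ¬IsSquare β) :
    IsStarter p (qrStarter p β) := by
  have hβ0 : β ≠ 0 := by rintro rfl; exact hβ IsSquare.zero
  have hβ1 : 1 - β ≠ 0 := sub_ne_zero.mpr fun h => hβ (h ▸ IsSquare.one)
  refine ⟨?_, ?_, fun a ha => ?_, fun a ha => ?_⟩
  · rintro _ ⟨x, hx0, -, rfl⟩ hdiag
    exact mul_ne_zero hβ1 hx0 (by linear_combination Sym2.mk_isDiag_iff.mp hdiag)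
  · rintro _ ⟨x, hx0, -, rfl⟩ h0
    rcases Sym2.mem_iff.mp h0 with h0 | h0
    exacts [hx0 h0.symm, mul_ne_zero hβ0 hx0 h0.symm]
  · refine existsUnique_mem_of_existsUnique_isSquare ?_
    refine (existsUnique_congr fun x => ?_).mp (existsUnique_isSquare_eq_or_mul_eq hβ ha)
    rw [Sym2.mem_iff, eq_comm, @eq_comm _ _ a]
  · refine existsUnique_mem_of_existsUnique_isSquare ?_
    refine (existsUnique_congr fun x => ?_).mp
      (existsUnique_isSquare_eq_or_mul_eq hneg (mul_ne_zero (inv_ne_zero hβ1) ha))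
    rw [Sym2.exists_eq_mk_sub_eq_iff]
    refine and_congr_right' (or_congr ?_ ?_) <;> rw [eq_inv_mul_iff_mul_eq₀ hβ1] <;>
      constructor <;> intro h <;> linear_combination h

theorem isStrongStarter (hS : IsStarter p (qrStarter p β)) (hβ : 1 + β ≠ 0) :
    IsStrongStarter p (qrStarter p β) := by
  refine ⟨hS, ?_, ?_⟩
  · rintro _ ⟨x, hx0, -, rfl⟩
    rw [pairSum_mk, ← one_add_mul]
    exact mul_ne_zero hβ hx0
  · rintro _ ⟨x, -, -, rfl⟩ _ ⟨y, -, -, rfl⟩ h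
    rw [pairSum_mk, pairSum_mk, ← one_add_mul, ← one_add_mul] at h
    rw [mul_left_cancel₀ hβ h]

theorem mk_two_mul_mem_or_mk_neg_mem (hneg : ¬IsSquare (-1 : ZMod p))
    (h2 : ¬IsSquare (2 : ZMod p)) (hβ : β = 2 ∨ β = 2⁻¹) {a : ZMod p} (ha : a ≠ 0) :
    s(a, 2 * a) ∈ qrStarter p β ∨ s(-(2 * a), -a) ∈ qrStarter p β := by
  have h20 : (2 : ZMod p) ≠ 0 := by rintro h; exact h2 (h ▸ IsSquare.zero)
  rcases hβ with rfl | rfl <;> by_cases hsq : IsSquare a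
  · exact .inl ⟨a, ha, hsq, rfl⟩
  · refine .inr ⟨-a, neg_ne_zero.mpr ha, ?_, ?_⟩
    · simpa using (isSquare_mul_iff_not_isSquare hneg ha).mpr hsq
    · rw [Sym2.eq_swap, mul_neg]
  · refine .inr ⟨-(2 * a), by simp [h20, ha], ?_, ?_⟩
    · simpa using ((isSquare_mul_iff_not_isSquare hneg h20).mpr h2).mul hsq
    · rw [mul_neg, inv_mul_cancel_left₀ h20]
  · refine .inl ⟨2 * a, mul_ne_zero h20 ha, (isSquare_mul_iff_not_isSquare h2 ha).mpr hsq, ?_⟩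
    rw [inv_mul_cancel_left₀ h20, Sym2.eq_swap]

end qrStarter

/-- Theorem 2.2: for a prime `p ≡ 3 (mod 8)`, `p ≠ 3`, and `β ∈ {2, 2⁻¹}`,
the set `S_β = {{x, βx} : x ∈ QR(p)}` is a strong Skolem starter for `ℤ_p`. -/
theorem strong_skolem_starter_two (p : ℕ) (hp : p.Prime) (h8 : p % 8 = 3) (hp3 : p ≠ 3)
    (β : ZMod p) (hβ : β = 2 ∨ β = (2 : ZMod p)⁻¹) :
    IsStrongSkolemStarter p {z | ∃ x : ZMod p, x ≠ 0 ∧ IsSquare x ∧ z = s(x, β * x)} := by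
  have := Fact.mk hp
  have hneg : ¬IsSquare (-1 : ZMod p) := by rw [ZMod.exists_sq_eq_neg_one_iff]; omega
  have h2 : ¬IsSquare (2 : ZMod p) := by rw [ZMod.exists_sq_eq_two_iff (by omega)]; omega
  have h3 : ((3 : ℕ) : ZMod p) ≠ 0 := by
    rw [Ne, ZMod.natCast_eq_zero_iff, Nat.prime_dvd_prime_iff_eq hp Nat.prime_three]
    exact hp3
  have hS := qrStarter.isStarter hneg (show ¬IsSquare β by rcases hβ with rfl | rfl <;> simpa)
  have hβ1 : 1 + β ≠ 0 := by
    have h20 : (2 : ZMod p) ≠ 0 := fun h => h2 (h ▸ IsSquare.zero)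
    rcases hβ with rfl | rfl <;> intro h <;> apply h3 <;> push_cast
    · linear_combination h
    · linear_combination 2 * h - mul_inv_cancel₀ h20
  exact ⟨qrStarter.isStrongStarter hS hβ1, isSkolemStarter_of_mk_two_mul_mem_or hS
    fun _ => qrStarter.mk_two_mul_mem_or_mk_neg_mem hneg h2 hβ⟩
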